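/- Let p ∈ [1,∞] with conjugate exponent q, let (α_n) be a decreasing positive sequence tending to 0, and A = {α_n e_n} ⊂ ℓ_p (with p = ∞ meaning c₀). Then the thickness exponent satisfies τ(A; ℓ_p) ≥ q·d_B(A)/(q + d_B(A)). -/

import Mathlib

open Filter Metric Set Pointwise Topology ENNReal

/-- `coverNum X ε` : minimal number of balls of radius `ε` with centres in `X` covering `X`. -/
noncomputable def coverNum {E : Type*} [SeminormedAddCommGroup E] (X : Set E) (ε : ℝ) : ℕ∞ :=
  sInf {n : ℕ∞ | ∃ F : Finset E, ↑F ⊆ X ∧ (X ⊆ ⋃ c ∈ F, Metric.ball c ε) ∧ n = F.card}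

/-- extended logarithm of an extended natural number. -/
noncomputable def elog (n : ℕ∞) : EReal :=
  if n = ⊤ then ⊤ else ((Real.log n.toNat : ℝ) : EReal)

/-- The upper box-counting dimension `d_B(X) = limsup_{ε → 0⁺} log N(X,ε) / (-log ε)`. -/
noncomputable def dimBox {E : Type*} [SeminormedAddCommGroup E] (X : Set E) : EReal :=
  Filter.limsup (fun ε : ℝ => elog (coverNum X ε) / ((-Real.log ε : ℝ) : EReal)) (𝓝[>] 0)

/-- `thickNum X ε` : smallest dimension of a finite-dimensional subspace `V` with
`dist(x, V) ≤ ε` for all `x ∈ X` (`⊤` if none exists). -/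
noncomputable def thickNum {E : Type*} [NormedAddCommGroup E] [NormedSpace ℝ E]
    (X : Set E) (ε : ℝ) : ℕ∞ :=
  sInf {n : ℕ∞ | ∃ V : Submodule ℝ E, FiniteDimensional ℝ V ∧ n = Module.finrank ℝ V ∧
    ∀ x ∈ X, Metric.infDist x (V : Set E) ≤ ε}

/-- The thickness exponent `τ(X) = limsup_{ε → 0⁺} log d(X,ε) / (-log ε)`. -/
noncomputable def thickness {E : Type*} [NormedAddCommGroup E] [NormedSpace ℝ E]
    (X : Set E) : EReal :=
  Filter.limsup (fun ε : ℝ => elog (thickNum X ε) / ((-Real.log ε : ℝ) : EReal)) (𝓝[>] 0)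

/-- `dualThickNum X θ ε` : minimal dimension of a subspace `U ⊆ E*` such that for all
`x, y ∈ X` with `‖x - y‖ ≥ ε` some `φ ∈ U` has `|φ(x-y)| ≥ ε^(1+θ)`. -/
noncomputable def dualThickNum {E : Type*} [NormedAddCommGroup E] [NormedSpace ℝ E]
    (X : Set E) (θ ε : ℝ) : ℕ∞ :=
  sInf {n : ℕ∞ | ∃ U : Submodule ℝ (E →L[ℝ] ℝ), FiniteDimensional ℝ U ∧ n = Module.finrank ℝ U ∧
    ∀ x ∈ X, ∀ y ∈ X, ε ≤ ‖x - y‖ → ∃ φ ∈ U, ε ^ (1 + θ) ≤ |φ (x - y)|}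

noncomputable def dualThickTheta {E : Type*} [NormedAddCommGroup E] [NormedSpace ℝ E]
    (X : Set E) (θ : ℝ) : EReal :=
  Filter.limsup (fun ε : ℝ => elog (dualThickNum X θ ε) / ((-Real.log ε : ℝ) : EReal)) (𝓝[>] 0)

/-- The dual thickness `τ*(X) = lim_{θ → 0⁺} τ*_θ(X)` (the limit exists by monotonicity and
equals the limsup as `θ → 0⁺`). -/
noncomputable def dualThickness {E : Type*} [NormedAddCommGroup E] [NormedSpace ℝ E]
    (X : Set E) : EReal :=
  Filter.limsup (fun θ : ℝ => dualThickTheta X θ) (𝓝[>] 0)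

/-- `sigmaNum X α ε` : minimal dimension of a subspace `V ⊆ E*` such that whenever
`x, y ∈ X` with `‖x - y‖ ≥ ε` there is `Φ ∈ V` with `‖Φ‖ = 1` and `|Φ(x-y)| ≥ α ε`. -/
noncomputable def sigmaNum {E : Type*} [NormedAddCommGroup E] [NormedSpace ℝ E]
    (X : Set E) (α ε : ℝ) : ℕ∞ :=
  sInf {n : ℕ∞ | ∃ V : Submodule ℝ (E →L[ℝ] ℝ), FiniteDimensional ℝ V ∧ n = Module.finrank ℝ V ∧
    ∀ x ∈ X, ∀ y ∈ X, ε ≤ ‖x - y‖ → ∃ Φ ∈ V, ‖Φ‖ = 1 ∧ α * ε ≤ |Φ (x - y)|}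

noncomputable def sigmaExp {E : Type*} [NormedAddCommGroup E] [NormedSpace ℝ E]
    (X : Set E) (α : ℝ) : EReal :=
  Filter.limsup (fun ε : ℝ => elog (sigmaNum X α ε) / ((-Real.log ε : ℝ) : EReal)) (𝓝[>] 0)

/-!
If `A` needs more than `ε^{-d}` balls of radius `ε`, then more than `ε^{-d}` of the `α_n` are at
least `δ = ε/2`. Let `V` be a subspace with `dist(α_n e_n, V) ≤ η` for all `n`. If `dim V` is
smaller than that count, some nonzero functional `∑_{n ≤ dim V} c_n e_n^*` vanishes on `V`;
evaluating it at `α_k e_k - v` for the coefficient `c_k` of largest modulus, and comparing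
`ℓ^1` with `ℓ^p` on `dim V + 1` coordinates, gives `δ ≤ (dim V + 1)^{1/q} η`. At the scale
`η = δ^{1 + d/q}` this forces `dim V + 1 ≥ δ^{-d}`, hence `τ(A) ≥ d / (1 + d/q) = qd/(q+d)` for
every `d < d_B(A)`.
-/

lemma Real.log_natCast_mono : Monotone fun n : ℕ => Real.log n := by
  intro m n hmn
  rcases m.eq_zero_or_pos with rfl | hm
  · simpa using Real.log_natCast_nonneg n
  · exact Real.log_le_log (by exact_mod_cast hm) (by exact_mod_cast hmn)

lemma Real.log_natCast_add_one_le {m : ℕ} (hm : m ≠ 0) :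
    Real.log (m + 1) ≤ Real.log 2 + Real.log m := by
  rw [← Real.log_mul two_ne_zero (by positivity)]
  exact Real.log_le_log (by positivity) (by linarith [(Nat.one_le_cast (α := ℝ)).2 hm.bot_lt])

lemma Real.neg_mul_log_le_log_of_le_rpow_mul_rpow {δ x θ d : ℝ} (hδ : 0 < δ) (hx : 0 < x)
    (hθ : 0 < θ) (h : δ ≤ x ^ θ * δ ^ (1 + θ * d)) : d * -Real.log δ ≤ Real.log x := by
  have hlog := Real.log_le_log hδ h
  rw [Real.log_mul (by positivity) (by positivity), Real.log_rpow hx, Real.log_rpow hδ] at hlog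
  exact le_of_mul_le_mul_left (by linarith) hθ

lemma elog_natCast (n : ℕ) : elog n = Real.log n := by
  simp [elog]

lemma elog_nonneg (n : ℕ∞) : 0 ≤ elog n := by
  induction n with
  | top => simp [elog]
  | coe n => rw [elog_natCast]; exact_mod_cast Real.log_natCast_nonneg n

lemma elog_mono : Monotone elog := by
  intro m n hmn
  induction n with
  | top => simp [elog]
  | coe n =>
    lift m to ℕ using ne_top_of_le_ne_top (ENat.natCast_ne_top n) hmn
    rw [elog_natCast, elog_natCast, EReal.coe_le_coe_iff]
    exact Real.log_natCast_mono (by exact_mod_cast hmn)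

lemma le_elog_sInf {S : Set ℕ∞} {r : EReal} (h : ∀ n ∈ S, r ≤ elog n) : r ≤ elog (sInf S) := by
  rcases S.eq_empty_or_nonempty with rfl | hS
  · simp [elog]
  · exact h _ (csInf_mem hS)

lemma limsup_elog_div_neg_log_nonneg (F : ℝ → ℕ∞) :
    0 ≤ limsup (fun ε : ℝ => elog (F ε) / ((-Real.log ε : ℝ) : EReal)) (𝓝[>] 0) := by
  refine le_limsup_of_frequently_le (Eventually.frequently ?_)
  filter_upwards [Ioo_mem_nhdsGT zero_lt_one] with ε ⟨hε0, hε1⟩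
  refine EReal.div_nonneg (elog_nonneg _) (EReal.coe_nonneg.2 ?_)
  linarith [Real.log_neg hε0 hε1]

lemma le_limsup_of_frequently_le_of_tendsto {α β γ : Type*} [CompleteLinearOrder γ]
    [DenselyOrdered γ] [TopologicalSpace γ] [OrderTopology γ]
    {f : Filter α} {l : Filter β} {g : α → γ} {φ : α → β} {R : β → γ} {L : γ}
    (hg : Tendsto g f (𝓝 L)) (hφ : Tendsto φ f l) (h : ∃ᶠ a in f, g a ≤ R (φ a)) :
    L ≤ limsup R l :=
  le_of_forall_lt_imp_le_of_dense fun _s hs => le_limsup_of_frequently_le <| hφ.frequently <|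
    (h.and_eventually (hg.eventually_const_lt hs)).mono fun _ h => h.2.le.trans h.1

lemma tendsto_affine_neg_log_div (d a b β : ℝ) (hβ : β ≠ 0) :
    Tendsto (fun ε : ℝ => (d * -Real.log ε - a) / (β * (-Real.log ε + b))) (𝓝[>] 0)
      (𝓝 (d / β)) := by
  suffices Tendsto (fun t : ℝ => (d * t - a) / (β * (t + b))) atTop (𝓝 (d / β)) from
    this.comp (tendsto_neg_atBot_atTop.comp Real.tendsto_log_nhdsGT_zero)
  have h : Tendsto (fun t : ℝ => (d - a * t⁻¹) / (β * (1 + b * t⁻¹))) atTop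
      (𝓝 ((d - a * 0) / (β * (1 + b * 0)))) :=
    ((tendsto_const_nhds.sub (tendsto_const_nhds.mul tendsto_inv_atTop_zero)).div
      (tendsto_const_nhds.mul (tendsto_const_nhds.add
        (tendsto_const_nhds.mul tendsto_inv_atTop_zero))) (by simpa using hβ))
  rw [mul_zero, mul_zero, sub_zero, add_zero, mul_one] at h
  refine h.congr' ?_
  filter_upwards [eventually_gt_atTop 0] with t ht
  field_simp

lemma ENNReal.one_sub_toReal_inv_of_inv_add_inv {p q : ℝ≥0∞} (hpq : p⁻¹ + q⁻¹ = 1) :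
    1 - p⁻¹.toReal = q⁻¹.toReal := by
  have hp : p⁻¹ ≠ ⊤ := ne_top_of_le_ne_top one_ne_top (hpq ▸ le_self_add)
  have hq : q⁻¹ ≠ ⊤ := ne_top_of_le_ne_top one_ne_top (hpq ▸ le_add_self)
  have := congrArg ENNReal.toReal hpq
  rw [ENNReal.toReal_add hp hq, ENNReal.toReal_one] at this
  linarith

lemma ENNReal.one_le_toReal_of_inv_add_inv {p q : ℝ≥0∞} (hpq : p⁻¹ + q⁻¹ = 1) (hq : q ≠ ⊤) :
    1 ≤ q.toReal := by
  have : 1 ≤ q := ENNReal.inv_le_one.1 (hpq ▸ le_add_self)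
  simpa using ENNReal.toReal_mono hq this

-- `q = ⊤` and `D ∈ {0, ⊤}` are settled by the conventions `x / ⊤ = 0` and `0 / x = 0`
lemma EReal.coe_ennreal_mul_div_add_le {q : ℝ≥0∞} {D τ : EReal} (hD : 0 ≤ D) (hτ : 0 ≤ τ)
    (h : q ≠ ⊤ → ∀ d : ℝ, 0 < d → (d : EReal) < D →
      ((q.toReal * d / (q.toReal + d) : ℝ) : EReal) ≤ τ) :
    (q : EReal) * D / (q + D) ≤ τ := by
  rcases eq_or_ne q ⊤ with rfl | hq
  · rw [EReal.coe_ennreal_top, EReal.top_add_of_ne_bot (EReal.bot_lt_zero.trans_le hD).ne',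
      EReal.div_top]
    exact hτ
  rw [← EReal.coe_ennreal_toReal hq]
  induction D using EReal.rec with
  | bot => exact absurd hD (by simp)
  | top => rw [EReal.add_top_of_ne_bot (EReal.coe_ne_bot _), EReal.div_top]; exact hτ
  | coe D =>
    rw [← EReal.coe_mul, ← EReal.coe_add, ← EReal.coe_div]
    rcases (EReal.coe_nonneg.1 hD).eq_or_lt with rfl | hD0
    · simpa using hτ
    have hcont : ContinuousAt (fun d : ℝ => q.toReal * d / (q.toReal + d)) D := by
      fun_prop (disch := positivity)
    refine le_of_tendsto (EReal.tendsto_coe.2 (hcont.tendsto.mono_left nhdsWithin_le_nhds))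
      (?_ : ∀ᶠ d in 𝓝[<] D, _)
    filter_upwards [Ioo_mem_nhdsLT hD0] with d ⟨hd0, hdD⟩
    exact h hq d hd0 (EReal.coe_lt_coe_iff.2 hdD)

theorem Submodule.exists_sum_smul_apply_eq_zero {K M ι : Type*} [Field K] [AddCommGroup M]
    [Module K M] (V : Submodule K M) [FiniteDimensional K V] (f : ι → Module.Dual K M)
    {s : Finset ι} (hs : Module.finrank K V < s.card) :
    ∃ c : ι → K, (∃ i ∈ s, c i ≠ 0) ∧ ∀ v ∈ V, (∑ i ∈ s, c i • f i) v = 0 := by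
  classical
  have hdep : ¬LinearIndependent K fun i : s => (f i).domRestrict V := fun h => by
    have := h.fintype_card_le_finrank
    rw [Subspace.dual_finrank_eq, Fintype.card_coe] at this
    omega
  obtain ⟨g, hg, i, hi⟩ := Fintype.not_linearIndependent_iff.1 hdep
  refine ⟨fun j => if h : j ∈ s then g ⟨j, h⟩ else 0, ⟨i, i.2, by simpa using hi⟩, fun v hv => ?_⟩
  have := LinearMap.congr_fun hg ⟨v, hv⟩
  rw [← Finset.sum_attach s]
  simpa using this

namespace lp

variable {ι : Type*} {p : ℝ≥0∞} [Fact (1 ≤ p)]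

theorem sum_norm_le_card_rpow_mul_norm {E : ι → Type*} [∀ i, NormedAddCommGroup (E i)]
    (x : lp E p) (s : Finset ι) :
    ∑ i ∈ s, ‖x i‖ ≤ (s.card : ℝ) ^ (1 - p⁻¹.toReal) * ‖x‖ := by
  rcases eq_or_ne p ⊤ with rfl | hp
  · calc ∑ i ∈ s, ‖x i‖ ≤ ∑ _i ∈ s, ‖x‖ :=
          Finset.sum_le_sum fun i _ => norm_apply_le_norm ENNReal.top_ne_zero x i
      _ = (s.card : ℝ) ^ (1 - (⊤⁻¹ : ℝ≥0∞).toReal) * ‖x‖ := by simp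
  have hr : 1 ≤ p.toReal := by
    simpa using ENNReal.toReal_mono hp (Fact.out : 1 ≤ p)
  have hr0 : 0 < p.toReal := zero_lt_one.trans_le hr
  rw [ENNReal.toReal_inv, ← Real.rpow_le_rpow_iff (by positivity) (by positivity) hr0]
  calc (∑ i ∈ s, ‖x i‖) ^ p.toReal
      ≤ (s.card : ℝ) ^ (p.toReal - 1) * ∑ i ∈ s, ‖x i‖ ^ p.toReal := by
        simpa using Real.rpow_sum_le_const_mul_sum_rpow s (fun i => ‖x i‖) hr
    _ ≤ (s.card : ℝ) ^ (p.toReal - 1) * ‖x‖ ^ p.toReal := by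
        gcongr
        exact sum_rpow_le_norm_rpow hr0 x s
    _ = ((s.card : ℝ) ^ (1 - p.toReal⁻¹) * ‖x‖) ^ p.toReal := by
        rw [Real.mul_rpow (by positivity) (norm_nonneg _), ← Real.rpow_mul (by positivity)]
        congr 2
        field_simp

theorem exists_abs_le_card_rpow_mul_infDist_single [DecidableEq ι]
    (V : Submodule ℝ (lp (fun _ : ι => ℝ) p)) [FiniteDimensional ℝ V] (a : ι → ℝ) {s : Finset ι}
    (hs : Module.finrank ℝ V < s.card) :
    ∃ k ∈ s, |a k| ≤ (s.card : ℝ) ^ (1 - p⁻¹.toReal) *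
      infDist (lp.single p k (a k)) (V : Set (lp (fun _ : ι => ℝ) p)) := by
  set C : ℝ := (s.card : ℝ) ^ (1 - p⁻¹.toReal)
  obtain ⟨c, ⟨i, his, hci⟩, hcV⟩ :=
    V.exists_sum_smul_apply_eq_zero (fun i => evalₗ (𝕜 := ℝ) (fun _ : ι => ℝ) p i) hs
  obtain ⟨k, hks, hk⟩ := s.exists_max_image (fun i => |c i|) ⟨i, his⟩
  have hck : 0 < |c k| := (abs_pos.2 hci).trans_le (hk i his)
  set φ := ∑ i ∈ s, c i • evalₗ (𝕜 := ℝ) (fun _ : ι => ℝ) p i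
  have hφ (y : lp (fun _ : ι => ℝ) p) : |φ y| ≤ |c k| * (C * ‖y‖) :=
    calc |φ y| = |∑ i ∈ s, c i * y i| := by simp [φ]
      _ ≤ ∑ i ∈ s, |c i| * ‖y i‖ := (Finset.abs_sum_le_sum_abs _ _).trans_eq (by simp [abs_mul])
      _ ≤ ∑ i ∈ s, |c k| * ‖y i‖ :=
          Finset.sum_le_sum fun i hi => mul_le_mul_of_nonneg_right (hk i hi) (norm_nonneg _)
      _ = |c k| * ∑ i ∈ s, ‖y i‖ := (Finset.mul_sum ..).symm
      _ ≤ |c k| * (C * ‖y‖) := by gcongr; exact sum_norm_le_card_rpow_mul_norm y s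
  have hφk : φ (lp.single p k (a k)) = c k * a k := by
    simp [φ, lp.single_apply, Pi.single_apply, hks]
  have hC : 0 < C := Real.rpow_pos_of_pos (by exact_mod_cast (Nat.zero_le _).trans_lt hs) _
  refine ⟨k, hks, ?_⟩
  rw [← div_le_iff₀' hC, Metric.le_infDist ⟨0, V.zero_mem⟩]
  intro v hv
  rw [div_le_iff₀' hC, dist_eq_norm]
  have := hφ (lp.single p k (a k) - v)
  rw [map_sub, hcV v hv, sub_zero, hφk, abs_mul] at this
  exact le_of_mul_le_mul_left this hck

end lp

def scaledBasis (p : ℝ≥0∞) [Fact (1 ≤ p)] (α : ℕ → ℝ) : Set (lp (fun _ : ℕ => ℝ) p) :=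
  range fun n => lp.single p n (α n)

section scaledBasis

variable {p q : ℝ≥0∞} [Fact (1 ≤ p)] {α : ℕ → ℝ}

theorem coverNum_scaledBasis_le (hα : Antitone α) (hα0 : ∀ n, 0 ≤ α n) {δ : ℝ} {N : ℕ}
    (hN : α N < δ) : coverNum (scaledBasis p α) (2 * δ) ≤ N + 1 := by
  classical
  have hnorm (n : ℕ) : ‖(lp.single p n (α n) : lp (fun _ : ℕ => ℝ) p)‖ = α n := by
    rw [lp.norm_single (zero_lt_one.trans_le Fact.out), Real.norm_of_nonneg (hα0 n)]
  set F := (Finset.range (N + 1)).image fun n => (lp.single p n (α n) : lp (fun _ : ℕ => ℝ) p)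
  have hF : (F.card : ℕ∞) ≤ N + 1 := by
    exact_mod_cast Finset.card_image_le.trans (Finset.card_range _).le
  refine le_trans (sInf_le ?_) hF
  refine ⟨F, ?_, ?_, rfl⟩
  · rw [Finset.coe_image]
    exact image_subset_range _ _
  rintro _ ⟨n, rfl⟩
  obtain ⟨c, hcN, hc⟩ : ∃ c ≤ N, dist (lp.single p n (α n) : lp (fun _ : ℕ => ℝ) p)
      (lp.single p c (α c)) < 2 * δ := by
    rcases le_or_gt n N with hn | hn
    · exact ⟨n, hn, by simpa using (hα0 N).trans_lt hN⟩
    · refine ⟨N, le_rfl, (dist_le_norm_add_norm _ _).trans_lt ?_⟩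
      rw [hnorm, hnorm]
      linarith [hα hn.le]
  exact mem_biUnion (Finset.mem_image_of_mem _ (Finset.mem_range.2 (Nat.lt_succ_of_le hcN))) hc

theorem le_finrank_or_le_rpow_mul_of_infDist_le {δ η : ℝ} {N : ℕ} (hN : ∀ n < N, δ ≤ α n)
    (V : Submodule ℝ (lp (fun _ : ℕ => ℝ) p)) [FiniteDimensional ℝ V]
    (hV : ∀ x ∈ scaledBasis p α, infDist x (V : Set (lp (fun _ : ℕ => ℝ) p)) ≤ η) :
    N ≤ Module.finrank ℝ V ∨
      δ ≤ ((Module.finrank ℝ V : ℝ) + 1) ^ (1 - p⁻¹.toReal) * η := by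
  refine or_iff_not_imp_left.2 fun hVN => ?_
  obtain ⟨k, hk, hak⟩ := lp.exists_abs_le_card_rpow_mul_infDist_single V α
    (s := Finset.range (Module.finrank ℝ V + 1)) (by simp)
  rw [Finset.card_range, Nat.cast_succ] at hak
  calc δ ≤ α k := hN k (by rw [Finset.mem_range] at hk; omega)
    _ ≤ |α k| := le_abs_self _
    _ ≤ _ := hak.trans (by gcongr; exact hV _ ⟨k, rfl⟩)

theorem le_elog_thickNum_scaledBasis (hpq : p⁻¹ + q⁻¹ = 1) (hq : q ≠ ⊤) (hα : Antitone α)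
    (hlim : Tendsto α atTop (𝓝 0)) {d ε : ℝ} (hd : 0 < d) (hε : 0 < ε) (hε1 : ε < 1)
    (hcov : ((d * -Real.log ε : ℝ) : EReal) < elog (coverNum (scaledBasis p α) ε)) :
    ((d * -Real.log ε - Real.log 2 : ℝ) : EReal) ≤
      elog (thickNum (scaledBasis p α) ((ε / 2) ^ (1 + q⁻¹.toReal * d))) := by
  classical
  have hθ : 0 < q⁻¹.toReal := by
    simpa using (ENNReal.one_le_toReal_of_inv_add_inv hpq hq).trans_lt' zero_lt_one
  have hδ : 0 < ε / 2 := half_pos hε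
  have hexists : ∃ N, α N < ε / 2 := (hlim.eventually (gt_mem_nhds hδ)).exists
  set N := Nat.find hexists
  have hlogN : d * -Real.log ε < Real.log (N + 1) := by
    have hcovN :=
      coverNum_scaledBasis_le (p := p) hα (hα.le_of_tendsto hlim) (Nat.find_spec hexists)
    rw [mul_div_cancel₀ ε two_ne_zero] at hcovN
    have := hcov.trans_le (elog_mono hcovN)
    rw [show ((N : ℕ∞) + 1) = ((N + 1 : ℕ) : ℕ∞) by push_cast; rfl, elog_natCast] at this
    exact_mod_cast this
  refine le_elog_sInf ?_
  rintro _ ⟨V, hV, rfl, hVA⟩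
  have hm : d * -Real.log ε ≤ Real.log (Module.finrank ℝ V + 1) := by
    rcases le_finrank_or_le_rpow_mul_of_infDist_le
      (fun n hn => not_lt.1 (Nat.find_min hexists hn)) V hVA with hNm | hδm
    · exact hlogN.le.trans
        (Real.log_le_log (by positivity) (by exact_mod_cast Nat.succ_le_succ hNm))
    · rw [ENNReal.one_sub_toReal_inv_of_inv_add_inv hpq] at hδm
      calc d * -Real.log ε ≤ d * -Real.log (ε / 2) := by
            gcongr
            exact half_le_self hε.le
        _ ≤ _ := Real.neg_mul_log_le_log_of_le_rpow_mul_rpow hδ (by positivity) hθ hδm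
  have hm0 : Module.finrank ℝ V ≠ 0 := fun h0 => by
    rw [h0, Nat.cast_zero, zero_add, Real.log_one] at hm
    nlinarith [Real.log_neg hε hε1]
  rw [elog_natCast, EReal.coe_le_coe_iff]
  linarith [Real.log_natCast_add_one_le hm0]

theorem le_thickness_scaledBasis (hpq : p⁻¹ + q⁻¹ = 1) (hq : q ≠ ⊤) (hα : Antitone α)
    (hlim : Tendsto α atTop (𝓝 0)) {d : ℝ} (hd : 0 < d)
    (hdB : (d : EReal) < dimBox (scaledBasis p α)) :
    ((q.toReal * d / (q.toReal + d) : ℝ) : EReal) ≤ thickness (scaledBasis p α) := by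
  set β := 1 + q⁻¹.toReal * d
  have hβ : 0 < β := by positivity
  have hq0 : 0 < q.toReal := (ENNReal.one_le_toReal_of_inv_add_inv hpq hq).trans_lt' zero_lt_one
  have hval : q.toReal * d / (q.toReal + d) = d / β := by
    simp only [β, ENNReal.toReal_inv]
    field_simp
  have hφ : Tendsto (fun ε : ℝ => (ε / 2) ^ β) (𝓝[>] 0) (𝓝[>] 0) := by
    refine tendsto_nhdsWithin_iff.2 ⟨?_, ?_⟩
    · have : ContinuousAt (fun ε : ℝ => (ε / 2) ^ β) 0 := by fun_prop (disch := positivity)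
      simpa [Real.zero_rpow hβ.ne'] using this.tendsto.mono_left nhdsWithin_le_nhds
    · filter_upwards [self_mem_nhdsWithin] with ε hε using Real.rpow_pos_of_pos (half_pos hε) β
  rw [hval]
  refine le_limsup_of_frequently_le_of_tendsto
    (EReal.tendsto_coe.2 (tendsto_affine_neg_log_div d (Real.log 2) (Real.log 2) β hβ.ne')) hφ ?_
  refine ((frequently_lt_of_lt_limsup (by isBoundedDefault) hdB).and_eventually
    (Ioo_mem_nhdsGT zero_lt_one)).mono fun ε ⟨hcov, hε0, hε1⟩ => ?_
  have ht : 0 < -Real.log ε := neg_pos.2 (Real.log_neg hε0 hε1)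
  rw [EReal.lt_div_iff (by exact_mod_cast ht) (EReal.coe_ne_top _), ← EReal.coe_mul] at hcov
  have hlog : -Real.log ((ε / 2) ^ β) = β * (-Real.log ε + Real.log 2) := by
    rw [Real.log_rpow (half_pos hε0), Real.log_div hε0.ne' two_ne_zero]
    ring
  simp only [hlog, EReal.coe_div]
  exact EReal.div_le_div_right_of_nonneg (EReal.coe_nonneg.2 (by positivity))
    (le_elog_thickNum_scaledBasis hpq hq hα hlim hd hε0 hε1 hcov)

end scaledBasis

theorem thickness_orthogonal_seq_ge_general (p q : ℝ≥0∞) [Fact (1 ≤ p)] (hpq : p⁻¹ + q⁻¹ = 1)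
    (α : ℕ → ℝ) (hdec : Antitone α)
    (hlim : Tendsto α atTop (𝓝 0)) :
    (q : EReal) * dimBox (Set.range fun n : ℕ => (lp.single p n (α n) : lp (fun _ : ℕ => ℝ) p)) /
        ((q : EReal) + dimBox (Set.range fun n : ℕ => (lp.single p n (α n) : lp (fun _ : ℕ => ℝ) p)))
      ≤ thickness (Set.range fun n : ℕ => (lp.single p n (α n) : lp (fun _ : ℕ => ℝ) p)) :=
  EReal.coe_ennreal_mul_div_add_le (limsup_elog_div_neg_log_nonneg _)
    (limsup_elog_div_neg_log_nonneg _) fun hq _d hd hdB =>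
      le_thickness_scaledBasis (p := p) hpq hq hdec hlim hd hdB

/-- for `A = {α_n e_n} ⊂ ℓ_p` with conjugate exponent `q`,
`τ(A) ≥ q d_B(A)/(q + d_B(A))`. -/
theorem thickness_orthogonal_seq_ge (p q : ℝ≥0∞) [Fact (1 ≤ p)] (hpq : p⁻¹ + q⁻¹ = 1)
    (α : ℕ → ℝ) (hpos : ∀ n, 0 < α n) (hdec : Antitone α)
    (hlim : Tendsto α atTop (𝓝 0)) :
    (q : EReal) * dimBox (Set.range fun n : ℕ => (lp.single p n (α n) : lp (fun _ : ℕ => ℝ) p)) /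
        ((q : EReal) + dimBox (Set.range fun n : ℕ => (lp.single p n (α n) : lp (fun _ : ℕ => ℝ) p)))
      ≤ thickness (Set.range fun n : ℕ => (lp.single p n (α n) : lp (fun _ : ℕ => ℝ) p)) :=
  thickness_orthogonal_seq_ge_general p q hpq α hdec hlim
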